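/- arXiv:2605.22571 — 7 statements merged into one kernel-verified Lean document; each statement's English description precedes it below -/
import Mathlib

section
/- Let q ∈ ℂ× be not a root of unity and let a, b ∈ ℂ×, n, m ≥ 1. The q-strings S_{n,a} and S_{m,b} are in special position (i.e. neither of the two sets is contained in the other and their union is again a q-string S_{k,c} for some k ≥ 1, c ∈ ℂ×) if and only if b/a belongs to the set {q^{2(n-p+1)} : 1 ≤ p ≤ min(m,n)} ∪ {q^{-2(m-p+1)} : 1 ≤ p ≤ min(m,n)}. -/
/-- The `q`-string `S_{n,a} = {a, q²a, …, q^{2(n-1)}a} ⊆ ℂ×`. -/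
def qString (q : ℂˣ) (n : ℕ) (a : ℂˣ) : Set ℂˣ :=
  {b | ∃ k, k < n ∧ b = q ^ (2 * k) * a}

/-- Two `q`-strings `S_{n,a}` and `S_{m,b}` are in special position if neither is
contained in the other and their union is again a `q`-string. -/
def SpecialPosition (q : ℂˣ) (n : ℕ) (a : ℂˣ) (m : ℕ) (b : ℂˣ) : Prop :=
  ¬ qString q n a ⊆ qString q m b ∧ ¬ qString q m b ⊆ qString q n a ∧
    ∃ k c, 1 ≤ k ∧ qString q n a ∪ qString q m b = qString q k c

lemma qzpow_eq_one {q : ℂˣ} (hq : ∀ k : ℕ, 1 ≤ k → q ^ k ≠ 1) :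
    ∀ i : ℤ, q ^ i = 1 → i = 0 := by
  intro i hi
  by_contra h
  rcases lt_or_gt_of_ne h with hlt | hgt
  · have h1 : q ^ ((-i).toNat : ℤ) = 1 := by
      rw [Int.toNat_of_nonneg (by omega), zpow_neg, hi, inv_one]
    rw [zpow_natCast] at h1
    exact hq _ (by omega) h1
  · have h1 : q ^ ((i).toNat : ℤ) = 1 := by
      rw [Int.toNat_of_nonneg (by omega)]; exact hi
    rw [zpow_natCast] at h1
    exact hq _ (by omega) h1

lemma qzpow_inj {q : ℂˣ} (hq : ∀ k : ℕ, 1 ≤ k → q ^ k ≠ 1) {i j : ℤ}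
    (h : q ^ i = q ^ j) : i = j := by
  have : q ^ (i - j) = 1 := by rw [zpow_sub, h]; simp
  have := qzpow_eq_one hq _ this
  omega

lemma qzpow_mul_inj {q : ℂˣ} (hq : ∀ k : ℕ, 1 ≤ k → q ^ k ≠ 1) {c : ℂˣ} {i j : ℤ}
    (h : q ^ i * c = q ^ j * c) : i = j :=
  qzpow_inj hq (mul_right_cancel h)

/-- ℤ-indexed membership description of a `q`-string whose base is `q ^ (2 i) * c`. -/
lemma mem_qString_iff {q : ℂˣ} {a c : ℂˣ} {i : ℤ} (ha : a = q ^ (2 * i) * c)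
    (n : ℕ) (x : ℂˣ) :
    x ∈ qString q n a ↔ ∃ t : ℤ, i ≤ t ∧ t < i + n ∧ x = q ^ (2 * t) * c := by
  constructor
  · rintro ⟨k, hk, rfl⟩
    refine ⟨i + k, by omega, by omega, ?_⟩
    rw [ha, ← mul_assoc, ← zpow_natCast q (2 * k), ← zpow_add]
    congr 1
    push_cast
    ring
  · rintro ⟨t, ht1, ht2, rfl⟩
    refine ⟨(t - i).toNat, by omega, ?_⟩
    rw [ha, ← mul_assoc, ← zpow_natCast q (2 * (t - i).toNat), ← zpow_add]
    congr 2
    push_cast [Int.toNat_of_nonneg (by omega : (0:ℤ) ≤ t - i)]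
    ring

/-- Helper: an explicit positive shift with overlap gives special position. -/
lemma specialPosition_of_shift {q : ℂˣ} (hq : ∀ k : ℕ, 1 ≤ k → q ^ k ≠ 1)
    {a b : ℂˣ} {n m d : ℕ} (hb : b = q ^ ((2 * d : ℕ) : ℤ) * a)
    (hd1 : 1 ≤ d) (hd2 : d ≤ n) (hd3 : n < d + m) (hn : 1 ≤ n) (hm : 1 ≤ m) :
    SpecialPosition q n a m b := by
  have ha0 : a = q ^ (2 * (0:ℤ)) * a := by simp
  have hbd : b = q ^ (2 * (d : ℤ)) * a := by
    rw [hb]; norm_cast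
  refine ⟨?_, ?_, d + m, a, by omega, ?_⟩
  · -- a ∈ S_{n,a} but a ∉ S_{m,b}
    intro hsub
    have hmem : a ∈ qString q n a := (mem_qString_iff ha0 n a).2 ⟨0, by omega, by omega, by simp⟩
    obtain ⟨t, ht1, ht2, ht3⟩ := (mem_qString_iff hbd m a).1 (hsub hmem)
    have h00 : q ^ (2 * (0:ℤ)) * a = q ^ (2 * t) * a := by rw [← ht3]; simp
    have := qzpow_mul_inj hq h00
    omega
  · -- top of S_{m,b} not in S_{n,a}
    intro hsub
    have hmem : q ^ (2 * ((d:ℤ) + m - 1)) * a ∈ qString q m b :=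
      (mem_qString_iff hbd m _).2 ⟨(d:ℤ) + m - 1, by omega, by omega, rfl⟩
    obtain ⟨t, ht1, ht2, ht3⟩ := (mem_qString_iff ha0 n _).1 (hsub hmem)
    have := qzpow_mul_inj hq ht3
    omega
  · ext x
    simp only [Set.mem_union, mem_qString_iff ha0 n x, mem_qString_iff hbd m x,
      mem_qString_iff ha0 (d + m) x]
    constructor
    · rintro (⟨t, ht1, ht2, rfl⟩ | ⟨t, ht1, ht2, rfl⟩)
      · exact ⟨t, by omega, by omega, rfl⟩
      · exact ⟨t, by omega, by omega, rfl⟩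
    · rintro ⟨t, ht1, ht2, rfl⟩
      rcases lt_or_ge t (0 + (n:ℤ)) with h | h
      · exact Or.inl ⟨t, ht1, h, rfl⟩
      · exact Or.inr ⟨t, by omega, by omega, rfl⟩

lemma specialPosition_symm {q : ℂˣ} {a b : ℂˣ} {n m : ℕ}
    (h : SpecialPosition q n a m b) : SpecialPosition q m b n a := by
  obtain ⟨h1, h2, k, c, hk, hu⟩ := h
  exact ⟨h2, h1, k, c, hk, by rw [Set.union_comm]; exact hu⟩

/-- `S_{n,a}` and `S_{m,b}` are in special position iff `b/a` belongs to
`{q^{2(n-p+1)} : 1 ≤ p ≤ min(m,n)} ∪ {q^{-2(m-p+1)} : 1 ≤ p ≤ min(m,n)}`. -/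
theorem specialPosition_iff (q : ℂˣ) (hq : ∀ k : ℕ, 1 ≤ k → q ^ k ≠ 1)
    (a b : ℂˣ) (n m : ℕ) (hn : 1 ≤ n) (hm : 1 ≤ m) :
    SpecialPosition q n a m b ↔
      ∃ p, 1 ≤ p ∧ p ≤ min m n ∧
        (b / a = q ^ (2 * (n - p + 1)) ∨ b / a = (q ^ (2 * (m - p + 1)))⁻¹) := by
  constructor
  · rintro ⟨h1, h2, k, c, hk, hu⟩
    -- get integer positions of a and b relative to c
    have hamem : a ∈ qString q k c := by
      rw [← hu]
      exact Or.inl ⟨0, by omega, by simp⟩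
    have hbmem : b ∈ qString q k c := by
      rw [← hu]
      exact Or.inr ⟨0, by omega, by simp⟩
    obtain ⟨i0, hi0, ha⟩ := hamem
    obtain ⟨j0, hj0, hbb⟩ := hbmem
    set i : ℤ := (i0 : ℤ) with hidef
    set j : ℤ := (j0 : ℤ) with hjdef
    have ha' : a = q ^ (2 * i) * c := by rw [ha]; norm_cast
    have hb' : b = q ^ (2 * j) * c := by rw [hbb]; norm_cast
    have hc' : c = q ^ (2 * (0:ℤ)) * c := by simp
    -- Translate union equality into an interval statement
    have H : ∀ t : ℤ, ((i ≤ t ∧ t < i + n) ∨ (j ≤ t ∧ t < j + m)) ↔ (0 ≤ t ∧ t < k) := by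
      intro t
      have := Set.ext_iff.1 hu (q ^ (2 * t) * c)
      rw [Set.mem_union, mem_qString_iff ha' n, mem_qString_iff hb' m,
        mem_qString_iff hc' k] at this
      constructor
      · rintro (h | h)
        · obtain ⟨s, hs1, hs2, hs3⟩ := this.1 (Or.inl ⟨t, h.1, h.2, rfl⟩)
          have := qzpow_mul_inj hq hs3; omega
        · obtain ⟨s, hs1, hs2, hs3⟩ := this.1 (Or.inr ⟨t, h.1, h.2, rfl⟩)
          have := qzpow_mul_inj hq hs3; omega
      · intro h
        rcases this.2 ⟨t, by omega, by omega, rfl⟩ with ⟨s, hs1, hs2, hs3⟩ | ⟨s, hs1, hs2, hs3⟩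
        · have := qzpow_mul_inj hq hs3; left; omega
        · have := qzpow_mul_inj hq hs3; right; omega
    -- Translate non-containments
    have hns1 : ¬ (j ≤ i ∧ i + n ≤ j + m) := by
      rintro ⟨hji, hnm⟩
      refine h1 ?_
      intro x hx
      rw [mem_qString_iff ha' n] at hx
      rw [mem_qString_iff hb' m]
      obtain ⟨t, ht1, ht2, rfl⟩ := hx
      exact ⟨t, by omega, by omega, rfl⟩
    have hns2 : ¬ (i ≤ j ∧ j + m ≤ i + n) := by
      rintro ⟨hij, hmn⟩
      refine h2 ?_
      intro x hx
      rw [mem_qString_iff hb' m] at hx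
      rw [mem_qString_iff ha' n]
      obtain ⟨t, ht1, ht2, rfl⟩ := hx
      exact ⟨t, by omega, by omega, rfl⟩
    have Hi := H i
    have Hj := H j
    have Hin := H (i + n)
    have Hjm := H (j + m)
    have key : (1 ≤ j - i ∧ j - i ≤ n ∧ (n:ℤ) - m + 1 ≤ j - i) ∨
        (1 ≤ i - j ∧ i - j ≤ m ∧ (m:ℤ) - n + 1 ≤ i - j) := by omega
    have hba : b / a = q ^ (2 * (j - i)) := by
      rw [div_eq_iff_eq_mul, hb', ha', ← mul_assoc, ← zpow_add]
      congr 2; ring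
    rcases key with ⟨k1, k2, k3⟩ | ⟨k1, k2, k3⟩
    · refine ⟨(n + 1 - (j - i)).toNat, by omega, by omega, Or.inl ?_⟩
      rw [hba, ← zpow_natCast q (2 * (n - (n + 1 - (j - i)).toNat + 1))]
      congr 1
      push_cast [Int.toNat_of_nonneg (by omega : (0:ℤ) ≤ n + 1 - (j - i))]
      omega
    · refine ⟨(m + 1 - (i - j)).toNat, by omega, by omega, Or.inr ?_⟩
      rw [hba, ← zpow_natCast q (2 * (m - (m + 1 - (i - j)).toNat + 1)), ← zpow_neg]
      congr 1
      push_cast [Int.toNat_of_nonneg (by omega : (0:ℤ) ≤ m + 1 - (i - j))]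
      omega
  · rintro ⟨p, hp1, hp2, hcase | hcase⟩
    · have hb : b = q ^ ((2 * (n - p + 1) : ℕ) : ℤ) * a := by
        rw [zpow_natCast]; exact div_eq_iff_eq_mul.mp hcase
      exact specialPosition_of_shift hq hb (by omega) (by omega) (by omega) hn hm
    · have ha : a = q ^ ((2 * (m - p + 1) : ℕ) : ℤ) * b := by
        rw [zpow_natCast]
        have hb2 := div_eq_iff_eq_mul.mp hcase
        rw [hb2, ← mul_assoc]
        simp
      exact specialPosition_symm
        (specialPosition_of_shift hq ha (by omega) (by omega) (by omega) hm hn)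
end

section
/- Let q ∈ ℂ× be not a root of unity. Every finite multiset S of elements of ℂ× (i.e. every finitely supported function S : ℂ× → ℕ) admits a decomposition as a multiset union of q-strings S_{n₁,a₁}, …, S_{n_s,a_s} (counted with multiplicity, so that for each c ∈ ℂ×, S(c) equals the number of indices t with c ∈ S_{n_t,a_t}) such that any two of the q-strings in the decomposition are in general position; moreover this decomposition is unique as a finite multiset of pairs (n_t, a_t) ∈ ℕ⁺ × ℂ×. -/
open scoped Classical

/-- Two `q`-strings are in general position if they are not in special position. -/
def GeneralPosition (q : ℂˣ) (n : ℕ) (a : ℂˣ) (m : ℕ) (b : ℂˣ) : Prop :=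
  ¬ SpecialPosition q n a m b

/-!
As `q` is not a root of unity, `z ↦ q^(2z) a` identifies `ℤ` with the orbit of `a`, and
`q`-strings in that orbit with integer intervals. Pick a maximal string `S_{n,a}` inside the
support of `S`, i.e. one whose neighbours `q⁻² a` and `q^(2n) a` lie outside it. Every string
inside the support is in general position with `S_{n,a}`, and `S_{n,a}` occurs in every
decomposition: otherwise the longest string of the decomposition starting at `a` is shorter,
and a string covering the next point is in special position with it. So decompositions of `S`
are exactly `S_{n,a}` added to decompositions of `S - 𝟙_{S_{n,a}}`, and both existence and
uniqueness follow by induction on the total multiplicity.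
-/

lemma Set.Finite.exists_maximal_Icc_subset {T : Set ℤ} (hT : T.Finite) {z : ℤ} (hz : z ∈ T) :
    ∃ u v, u ≤ z ∧ z ≤ v ∧ Set.Icc u v ⊆ T ∧ u - 1 ∉ T ∧ v + 1 ∉ T := by
  obtain ⟨lb, hlb⟩ := hT.bddBelow
  obtain ⟨ub, hub⟩ := hT.bddAbove
  obtain ⟨u, ⟨huz, hu⟩, humin⟩ := Int.exists_least_of_bdd
    (P := fun u => u ≤ z ∧ Set.Icc u z ⊆ T) ⟨lb, fun u hu => hlb (hu.2 ⟨le_rfl, hu.1⟩)⟩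
    ⟨z, le_rfl, by simpa using hz⟩
  obtain ⟨v, ⟨hzv, hv⟩, hvmax⟩ := Int.exists_greatest_of_bdd
    (P := fun v => z ≤ v ∧ Set.Icc z v ⊆ T) ⟨ub, fun v hv => hub (hv.2 ⟨hv.1, le_rfl⟩)⟩
    ⟨z, le_rfl, by simpa using hz⟩
  refine ⟨u, v, huz, hzv, fun x hx => ?_, fun hu' => ?_, fun hv' => ?_⟩
  · rcases le_total x z with hxz | hzx
    exacts [hu ⟨hx.1, hxz⟩, hv ⟨hzx, hx.2⟩]
  · have := humin (u - 1) ⟨by omega, fun x hx => ?_⟩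
    · omega
    · rcases eq_or_lt_of_le hx.1 with rfl | hlt
      exacts [hu', hu ⟨by omega, hx.2⟩]
  · have := hvmax (v + 1) ⟨by omega, fun x hx => ?_⟩
    · omega
    · rcases eq_or_lt_of_le hx.2 with rfl | hlt
      exacts [hv', hv ⟨hx.1, by omega⟩]

lemma Function.support_tsub_subset {α M : Type*} [AddCommMonoid M] [PartialOrder M]
    [CanonicallyOrderedAdd M] [Sub M] [OrderedSub M] (f g : α → M) :
    Function.support (f - g) ⊆ Function.support f :=
  fun _ hc hf => hc (by simp [hf])

section

variable {q : ℂˣ}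

def qOrbit (q a : ℂˣ) (z : ℤ) : ℂˣ := q ^ (2 * z) * a

@[simp]
lemma qOrbit_zero (a : ℂˣ) : qOrbit q a 0 = a := by simp [qOrbit]

lemma qOrbit_qOrbit (a : ℂˣ) (w z : ℤ) : qOrbit q (qOrbit q a w) z = qOrbit q a (z + w) := by
  simp only [qOrbit, ← mul_assoc, ← zpow_add, mul_add]

lemma qOrbit_natCast (a : ℂˣ) (k : ℕ) : qOrbit q a k = q ^ (2 * k) * a := by
  rw [qOrbit, ← zpow_natCast]
  push_cast
  rfl

lemma qOrbit_injective (hq : ¬IsOfFinOrder q) (a : ℂˣ) : Function.Injective (qOrbit q a) :=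
  (mul_left_injective a).comp <|
    (injective_zpow_iff_not_isOfFinOrder.2 hq).comp (mul_right_injective₀ two_ne_zero)

lemma qString_qOrbit (a : ℂˣ) (j : ℤ) (n : ℕ) :
    qString q n (qOrbit q a j) = qOrbit q a '' Set.Ico j (j + n) := by
  ext b
  constructor
  · rintro ⟨k, hk, rfl⟩
    refine ⟨j + k, ⟨by omega, by omega⟩, ?_⟩
    rw [← qOrbit_natCast, qOrbit_qOrbit, add_comm]
  · rintro ⟨z, ⟨hjz, hzn⟩, rfl⟩
    refine ⟨(z - j).toNat, by omega, ?_⟩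
    rw [← qOrbit_natCast, qOrbit_qOrbit]
    congr 1
    omega

lemma qString_eq_image (a : ℂˣ) (n : ℕ) : qString q n a = qOrbit q a '' Set.Ico 0 n := by
  simpa using qString_qOrbit (q := q) a 0 n

lemma qOrbit_mem_qString_qOrbit (a : ℂˣ) {j z : ℤ} {n : ℕ} (hjz : j ≤ z) (hzn : z < j + n) :
    qOrbit q a z ∈ qString q n (qOrbit q a j) := by
  rw [qString_qOrbit]
  exact ⟨z, ⟨hjz, hzn⟩, rfl⟩

lemma mem_qString_self {n : ℕ} (hn : 0 < n) (a : ℂˣ) : a ∈ qString q n a :=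
  ⟨0, hn, by simp⟩

lemma exists_qOrbit_eq_of_qOrbit_mem_qString {a b : ℂˣ} {t : ℤ} {m : ℕ}
    (h : qOrbit q a t ∈ qString q m b) : ∃ j, b = qOrbit q a j ∧ j ≤ t ∧ t < j + m := by
  obtain ⟨k, hk, hx⟩ := h
  refine ⟨t - k, ?_, by omega, by omega⟩
  rw [sub_eq_neg_add, ← qOrbit_qOrbit, hx, ← qOrbit_natCast, qOrbit_qOrbit, neg_add_cancel,
    qOrbit_zero]

lemma SpecialPosition.symm {n m : ℕ} {a b : ℂˣ} (h : SpecialPosition q n a m b) :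
    SpecialPosition q m b n a := by
  obtain ⟨h₁, h₂, k, c, hk, hunion⟩ := h
  exact ⟨h₂, h₁, k, c, hk, Set.union_comm _ _ ▸ hunion⟩

lemma GeneralPosition.symm {n m : ℕ} {a b : ℂˣ} (h : GeneralPosition q n a m b) :
    GeneralPosition q m b n a :=
  fun hs => h hs.symm

lemma generalPosition_self (n : ℕ) (a : ℂˣ) : GeneralPosition q n a n a :=
  fun h => h.1 subset_rfl

lemma specialPosition_qOrbit (hq : ¬IsOfFinOrder q) (a : ℂˣ) {u v : ℤ} {n m : ℕ}
    (huv : u < v) (hvn : v ≤ u + n) (hnm : u + n < v + m) :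
    SpecialPosition q n (qOrbit q a u) m (qOrbit q a v) := by
  simp only [SpecialPosition, qString_qOrbit, Set.image_subset_image_iff (qOrbit_injective hq a),
    Set.Ico_subset_Ico_iff (show u < u + n by omega),
    Set.Ico_subset_Ico_iff (show v < v + m by omega)]
  refine ⟨by omega, by omega, (v + m - u).toNat, qOrbit q a u, by omega, ?_⟩
  rw [qString_qOrbit, ← Set.image_union, Set.Ico_union_Ico' (by omega) (by omega)]
  congr 2
  · omega
  · omega

structure IsMaximalRun (q : ℂˣ) (S : ℂˣ → ℕ) (n : ℕ) (a : ℂˣ) : Prop where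
  pos : 0 < n
  subset_support : qString q n a ⊆ Function.support S
  left_eq_zero : S (qOrbit q a (-1)) = 0
  right_eq_zero : S (qOrbit q a n) = 0

namespace IsMaximalRun

variable {S : ℂˣ → ℕ} {n m : ℕ} {a b : ℂˣ}

lemma exists_qOrbit_eq (h : IsMaximalRun q S n a) (hsupp : qString q m b ⊆ Function.support S)
    {t : ℤ} (ht : qOrbit q a t ∈ qString q m b) (ht₀ : 0 ≤ t) (htn : t < n) :
    ∃ j, b = qOrbit q a j ∧ 0 ≤ j ∧ j ≤ t ∧ t < j + m ∧ j + m ≤ n := by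
  obtain ⟨j, rfl, hjt, htj⟩ := exists_qOrbit_eq_of_qOrbit_mem_qString ht
  refine ⟨j, rfl, ?_, hjt, htj, ?_⟩
  · by_contra! hj
    exact hsupp (qOrbit_mem_qString_qOrbit a (by omega) (by omega)) h.left_eq_zero
  · by_contra! hj
    exact hsupp (qOrbit_mem_qString_qOrbit a (by omega) hj) h.right_eq_zero

lemma subset_of_subset_support (h : IsMaximalRun q S n a)
    (hsupp : qString q m b ⊆ Function.support S) (ha : a ∈ qString q m b) :
    qString q m b ⊆ qString q n a := by
  obtain ⟨j, rfl, hj₀, -, -, hjn⟩ :=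
    h.exists_qOrbit_eq hsupp (t := 0) (by rwa [qOrbit_zero]) le_rfl (by exact_mod_cast h.pos)
  rw [qString_qOrbit, qString_eq_image]
  exact Set.image_mono (Set.Ico_subset_Ico hj₀ hjn)

lemma generalPosition (h : IsMaximalRun q S n a) (hsupp : qString q m b ⊆ Function.support S) :
    GeneralPosition q m b n a := by
  rintro ⟨hnot, -, k, c, -, hunion⟩
  have hsub : qString q k c ⊆ qString q n a := by
    refine h.subset_of_subset_support ?_ ?_ <;> rw [← hunion]
    · exact Set.union_subset hsupp h.subset_support
    · exact Or.inr (mem_qString_self h.pos a)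
  exact hnot (hunion ▸ Set.subset_union_left |>.trans hsub)

end IsMaximalRun

lemma exists_isMaximalRun (hq : ¬IsOfFinOrder q) {S : ℂˣ → ℕ}
    (hS : (Function.support S).Finite) {a : ℂˣ} (ha : S a ≠ 0) :
    ∃ n b, IsMaximalRun q S n b := by
  obtain ⟨u, v, hu₀, h₀v, hsub, hu, hv⟩ :=
    (hS.preimage (qOrbit_injective hq a).injOn).exists_maximal_Icc_subset (z := 0)
      (by simpa using ha)
  refine ⟨(v + 1 - u).toNat, qOrbit q a u, by omega, ?_, ?_, ?_⟩
  · rw [qString_qOrbit, Set.image_subset_iff]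
    exact fun x ⟨hux, hxv⟩ => hsub ⟨hux, by omega⟩
  · rw [qOrbit_qOrbit, neg_add_eq_sub]
    exact not_not.1 hu
  · rw [qOrbit_qOrbit, show ((v + 1 - u).toNat : ℤ) + u = v + 1 by omega]
    exact not_not.1 hv

noncomputable def stringCount (q : ℂˣ) (D : Multiset (ℕ × ℂˣ)) (c : ℂˣ) : ℕ :=
  Multiset.card (D.filter fun p => c ∈ qString q p.1 p.2)

lemma stringCount_ne_zero_iff {D : Multiset (ℕ × ℂˣ)} {c : ℂˣ} :
    stringCount q D c ≠ 0 ↔ ∃ p ∈ D, c ∈ qString q p.1 p.2 := by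
  simp [stringCount, Multiset.filter_eq_nil]

lemma stringCount_cons (n : ℕ) (a : ℂˣ) (D : Multiset (ℕ × ℂˣ)) (c : ℂˣ) :
    stringCount q ((n, a) ::ₘ D) c = (qString q n a).indicator 1 c + stringCount q D c := by
  by_cases hc : c ∈ qString q n a <;> simp [stringCount, hc, add_comm]

def IsGenPosDecomposition (q : ℂˣ) (S : ℂˣ → ℕ) (D : Multiset (ℕ × ℂˣ)) : Prop :=
  (∀ p ∈ D, 1 ≤ p.1) ∧ (∀ c, S c = stringCount q D c) ∧
    ∀ p ∈ D, ∀ p' ∈ D, GeneralPosition q p.1 p.2 p'.1 p'.2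

namespace IsGenPosDecomposition

variable {S : ℂˣ → ℕ} {D : Multiset (ℕ × ℂˣ)}

lemma subset_support (hD : IsGenPosDecomposition q S D) {p : ℕ × ℂˣ} (hp : p ∈ D) :
    qString q p.1 p.2 ⊆ Function.support S := fun c hc => by
  rw [Function.mem_support, hD.2.1 c, stringCount_ne_zero_iff]
  exact ⟨p, hp, hc⟩

lemma exists_mem (hD : IsGenPosDecomposition q S D) {c : ℂˣ} (hc : S c ≠ 0) :
    ∃ p ∈ D, c ∈ qString q p.1 p.2 := by
  rwa [hD.2.1 c, stringCount_ne_zero_iff] at hc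

end IsGenPosDecomposition

lemma isGenPosDecomposition_zero_iff {D : Multiset (ℕ × ℂˣ)} :
    IsGenPosDecomposition q 0 D ↔ D = 0 := by
  refine ⟨fun hD => Multiset.eq_zero_of_forall_notMem fun p hp => ?_, ?_⟩
  · exact hD.subset_support hp (mem_qString_self (hD.1 p hp) p.2) rfl
  · rintro rfl
    simp [IsGenPosDecomposition, stringCount]

namespace IsMaximalRun

variable {S : ℂˣ → ℕ} {n : ℕ} {a : ℂˣ}

lemma isGenPosDecomposition_cons_iff (h : IsMaximalRun q S n a) {D : Multiset (ℕ × ℂˣ)} :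
    IsGenPosDecomposition q S ((n, a) ::ₘ D) ↔
      IsGenPosDecomposition q (S - (qString q n a).indicator 1) D := by
  have hind : ∀ c, (qString q n a).indicator 1 c ≤ S c := fun c => by
    by_cases hc : c ∈ qString q n a
    · simpa [hc, Nat.one_le_iff_ne_zero] using h.subset_support hc
    · simp [hc]
  constructor
  · rintro ⟨hlen, hcount, hgp⟩
    refine ⟨fun p hp => hlen p (Multiset.mem_cons_of_mem hp), fun c => ?_,
      fun p hp p' hp' => hgp p (Multiset.mem_cons_of_mem hp) p' (Multiset.mem_cons_of_mem hp')⟩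
    rw [Pi.sub_apply, hcount c, stringCount_cons, Nat.add_sub_cancel_left]
  · intro hD
    have hgp : ∀ p ∈ D, GeneralPosition q p.1 p.2 n a := fun p hp =>
      h.generalPosition ((hD.subset_support hp).trans (Function.support_tsub_subset _ _))
    simp only [IsGenPosDecomposition, Multiset.forall_mem_cons]
    refine ⟨⟨h.pos, hD.1⟩, fun c => ?_, ⟨generalPosition_self n a, fun p hp => (hgp p hp).symm⟩,
      fun p hp => ⟨hgp p hp, hD.2.2 p hp⟩⟩
    rw [stringCount_cons, ← hD.2.1 c, Pi.sub_apply, Nat.add_sub_cancel' (hind c)]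

lemma mem_of_isGenPosDecomposition (hq : ¬IsOfFinOrder q) (h : IsMaximalRun q S n a)
    {D : Multiset (ℕ × ℂˣ)} (hD : IsGenPosDecomposition q S D) : (n, a) ∈ D := by
  have hstart : ∀ p ∈ D, a ∈ qString q p.1 p.2 → p.2 = a ∧ p.1 ≤ n := by
    intro p hp ha
    obtain ⟨j, hj, hj₀, hj₀', -, hjn⟩ := h.exists_qOrbit_eq (hD.subset_support hp) (t := 0)
      (by rwa [qOrbit_zero]) le_rfl (by exact_mod_cast h.pos)
    obtain rfl : j = 0 := by omega
    exact ⟨by rw [hj, qOrbit_zero], by omega⟩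
  obtain ⟨p₁, hp₁, ha₁⟩ := hD.exists_mem (h.subset_support (mem_qString_self h.pos a))
  obtain ⟨⟨m, b⟩, hp, hmax⟩ := (D.toFinset.filter fun p => a ∈ qString q p.1 p.2).exists_max_image
    Prod.fst ⟨p₁, by simpa using ⟨hp₁, ha₁⟩⟩
  simp only [Finset.mem_filter, Multiset.mem_toFinset] at hp hmax
  obtain ⟨hba, hmn⟩ : b = a ∧ m ≤ n := hstart _ hp.1 hp.2
  subst hba
  obtain rfl | hlt := eq_or_lt_of_le hmn
  · exact hp.1
  exfalso
  -- a string of `D` covering the point after `S_{m,a}` starts at `a` and is longer, or is in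
  -- special position with `S_{m,a}`
  obtain ⟨⟨m', b'⟩, hp', hmp'⟩ := hD.exists_mem (h.subset_support ⟨m, hlt, qOrbit_natCast b m⟩)
  obtain ⟨j, rfl, hj₀, hjm, hmj, -⟩ :=
    h.exists_qOrbit_eq (hD.subset_support hp') hmp' (by positivity) (by exact_mod_cast hlt)
  obtain rfl | hj₀ := eq_or_lt_of_le hj₀
  · have := hmax (m', qOrbit q b 0) ⟨hp', by simpa using mem_qString_self (by omega) b⟩
    omega
  · have hspecial := specialPosition_qOrbit hq b (u := 0) (n := m) (m := m') hj₀ (by omega)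
      (by omega)
    rw [qOrbit_zero] at hspecial
    exact hD.2.2 _ hp.1 _ hp' hspecial

lemma existsUnique_isGenPosDecomposition (hq : ¬IsOfFinOrder q) (h : IsMaximalRun q S n a)
    (h' : ∃! D, IsGenPosDecomposition q (S - (qString q n a).indicator 1) D) :
    ∃! D, IsGenPosDecomposition q S D := by
  obtain ⟨D', hD', huniq⟩ := h'
  refine ⟨(n, a) ::ₘ D', h.isGenPosDecomposition_cons_iff.2 hD', fun D hD => ?_⟩
  have hmem := h.mem_of_isGenPosDecomposition hq hD
  rw [← Multiset.cons_erase hmem] at hD ⊢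
  rw [huniq _ (h.isGenPosDecomposition_cons_iff.1 hD)]

lemma sum_sub_indicator_lt (h : IsMaximalRun q S n a) {s : Finset ℂˣ}
    (hs : Function.support S ⊆ s) :
    ∑ c ∈ s, (S - (qString q n a).indicator 1 : ℂˣ → ℕ) c < ∑ c ∈ s, S c := by
  have ha := h.subset_support (mem_qString_self h.pos a)
  refine Finset.sum_lt_sum (fun c _ => Nat.sub_le _ _) ⟨a, hs ha, ?_⟩
  simp only [Pi.sub_apply, Set.indicator_of_mem (mem_qString_self h.pos a), Pi.one_apply]
  exact Nat.sub_lt (Nat.pos_of_ne_zero ha) one_pos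

end IsMaximalRun

lemma existsUnique_isGenPosDecomposition (hq : ¬IsOfFinOrder q) {s : Finset ℂˣ} {S : ℂˣ → ℕ}
    (hS : Function.support S ⊆ s) : ∃! D, IsGenPosDecomposition q S D := by
  induction hN : ∑ c ∈ s, S c using Nat.strong_induction_on generalizing S with
  | _ N ih =>
  by_cases hS₀ : S = 0
  · subst hS₀
    exact ⟨0, isGenPosDecomposition_zero_iff.2 rfl, fun D => isGenPosDecomposition_zero_iff.1⟩
  obtain ⟨a, ha⟩ : ∃ a, S a ≠ 0 := Function.ne_iff.1 hS₀
  obtain ⟨n, b, hrun⟩ := exists_isMaximalRun hq (s.finite_toSet.subset hS) ha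
  exact hrun.existsUnique_isGenPosDecomposition hq (ih _ (hN ▸ hrun.sum_sub_indicator_lt hS)
    ((Function.support_tsub_subset _ _).trans hS) rfl)

end

/-- Every finite multiset `S` of elements of `ℂ×` (a finitely supported function
`S : ℂ× → ℕ`) admits a unique decomposition as a multiset union of `q`-strings
`S_{n₁,a₁}, …, S_{n_s,a_s}` which are pairwise in general position; the decomposition
is recorded as the finite multiset `D` of pairs `(n_t, a_t)`, and the counting condition
says that for each `c ∈ ℂ×`, `S c` is the number of indices `t` with `c ∈ S_{n_t,a_t}`. -/
theorem exists_unique_general_position_decomposition (q : ℂˣ)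
    (hq : ∀ k : ℕ, 1 ≤ k → q ^ k ≠ 1) (S : ℂˣ → ℕ) (hS : (Function.support S).Finite) :
    ∃! D : Multiset (ℕ × ℂˣ),
      (∀ p ∈ D, 1 ≤ p.1) ∧
      (∀ c : ℂˣ, S c = Multiset.card (D.filter fun p => c ∈ qString q p.1 p.2)) ∧
      (∀ p ∈ D, ∀ p' ∈ D, GeneralPosition q p.1 p.2 p'.1 p'.2) := by
  have hq' : ¬IsOfFinOrder q := fun h =>
    let ⟨k, hk, hqk⟩ := isOfFinOrder_iff_pow_eq_one.1 h
    hq k hk hqk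
  exact existsUnique_isGenPosDecomposition hq' (s := hS.toFinset) (by simp)
end

section
/- Let q ∈ ℂ× be not a root of unity, a ∈ ℂ×, n ≥ 1 and d = (d₁,…,d_n) ∈ ℕⁿ. For 1 ≤ i ≤ j ≤ n set k_{ij} = max{0, min{d_k - d_{i-1}, d_k - d_{j+1} : i ≤ k ≤ j}}, with the convention d₀ = d_{n+1} = 0. Then: (a) the multiset consisting, for each pair 1 ≤ i ≤ j ≤ n, of k_{ij} copies of the q-string S_{j-i+1, q^{2i}a} = {q^{2i}a, q^{2i+2}a, …, q^{2j}a} has as its multiset union exactly the multiset consisting of d_m copies of q^{2m}a for m = 1,…,n; and (b) for any two pairs (i,j) ≠ (r,s) with k_{ij} > 0 and k_{rs} > 0, the q-strings S_{j-i+1, q^{2i}a} and S_{s-r+1, q^{2r}a} are in general position. -/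
open scoped Classical

/-- `k_{ij} = max{0, min{d_k - d_{i-1}, d_k - d_{j+1} : i ≤ k ≤ j}}`
(with the conventions `d₀ = d_{n+1} = 0` imposed on `d` as hypotheses elsewhere). -/
def kij (d : ℕ → ℕ) (i j : ℕ) : ℕ :=
  if h : i ≤ j then
    ((Finset.Icc i j).inf' (Finset.nonempty_Icc.mpr h)
      fun k => min ((d k : ℤ) - (d (i - 1) : ℤ)) ((d k : ℤ) - (d (j + 1) : ℤ))).toNat
  else 0

open Finset Function

/-!
Slice the graph of `d` horizontally. Since `d` vanishes at `0` and `n + 1`, at every level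
`1 ≤ h ≤ d m` the position `m` lies in exactly one maximal run `[i, j]` of `{k | h ≤ d k}`,
and `[i, j]` is such a run precisely for the `k_{ij}` levels
`max (d (i-1)) (d (j+1)) < h ≤ min_{[i,j]} d`; summing over the levels gives (a).

Since `q` is not a root of unity, `q`-strings are intervals of exponents, and two of them are in
special position only as `[i, j]`, `[r, s]` with `i < r ≤ j + 1 ≤ s` (up to swapping).
Then `r - 1 ∈ [i, j]` and `j + 1 ∈ [r, s]`, so `k_{ij} > 0` forces `d (j+1) < d (r-1)` while
`k_{rs} > 0` forces the reverse.
-/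

/-- `[i, j]` is a maximal run of consecutive indices in the superlevel set `{k | h ≤ d k}`. -/
def IsLevelRun (d : ℕ → ℕ) (h i j : ℕ) : Prop :=
  d (i - 1) < h ∧ d (j + 1) < h ∧ ∀ k, i ≤ k → k ≤ j → h ≤ d k

section LevelRuns

variable {d : ℕ → ℕ}

lemma lt_kij_iff {i j : ℕ} (hij : i ≤ j) (t : ℕ) :
    t < kij d i j ↔ ∀ k, i ≤ k → k ≤ j → d (i - 1) + t < d k ∧ d (j + 1) + t < d k := by
  rw [kij, dif_pos hij, Int.lt_toNat, Finset.lt_inf'_iff]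
  simp only [mem_Icc, lt_min_iff, and_imp]
  exact forall₃_congr fun _ _ _ => by omega

lemma kij_pos_iff {i j : ℕ} (hij : i ≤ j) :
    0 < kij d i j ↔ ∀ k, i ≤ k → k ≤ j → d (i - 1) < d k ∧ d (j + 1) < d k := by
  simpa using lt_kij_iff (d := d) hij 0

lemma not_kij_pos_of_linked {i j r s : ℕ} (hir : i < r) (hrj : r ≤ j + 1)
    (hjs : j < s) (hkij : 0 < kij d i j) (hkrs : 0 < kij d r s) : False := by
  rw [kij_pos_iff (by omega)] at hkij hkrs
  have := (hkij (r - 1) (by omega) (by omega)).2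
  have := (hkrs (j + 1) (by omega) (by omega)).1
  omega

lemma card_filter_isLevelRun {i j k : ℕ} (hik : i ≤ k) (hkj : k ≤ j) :
    #{h ∈ Icc 1 (d k) | IsLevelRun d h i j} = kij d i j := by
  set M := max (d (i - 1)) (d (j + 1))
  have hrun (h : ℕ) (hM : M < h) :
      h ≤ M + kij d i j ↔ ∀ k, i ≤ k → k ≤ j → h ≤ d k := by
    rw [show h ≤ M + kij d i j ↔ h - M - 1 < kij d i j by omega, lt_kij_iff (hik.trans hkj)]
    exact forall₃_congr fun _ _ _ => by omega
  suffices ({h ∈ Icc 1 (d k) | IsLevelRun d h i j} : Finset ℕ) = Ioc M (M + kij d i j) by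
    simp [this]
  refine Finset.ext fun h => ?_
  rw [mem_filter]
  simp only [mem_Icc, mem_Ioc, IsLevelRun]
  constructor
  · rintro ⟨-, hi, hj, hle⟩
    exact ⟨by omega, (hrun h (by omega)).2 hle⟩
  · rintro ⟨hM, hle⟩
    have hle := (hrun h hM).1 hle
    exact ⟨⟨by omega, hle k hik hkj⟩, by omega, by omega, hle⟩

lemma IsLevelRun.eq_of_mem {h i j i' j' m : ℕ} (hr : IsLevelRun d h i j)
    (hr' : IsLevelRun d h i' j') (hm : i ≤ m ∧ m ≤ j) (hm' : i' ≤ m ∧ m ≤ j') :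
    i = i' ∧ j = j' := by
  obtain ⟨hi, hj, hle⟩ := hr
  obtain ⟨hi', hj', hle'⟩ := hr'
  have h₁ : ¬ i < i' := fun hlt => (hle (i' - 1) (by omega) (by omega)).not_gt hi'
  have h₂ : ¬ i' < i := fun hlt => (hle' (i - 1) (by omega) (by omega)).not_gt hi
  have h₃ : ¬ j < j' := fun hlt => (hle' (j + 1) (by omega) (by omega)).not_gt hj
  have h₄ : ¬ j' < j := fun hlt => (hle (j' + 1) (by omega) (by omega)).not_gt hj'
  omega

lemma exists_isLevelRun {h m n : ℕ} (h0 : d 0 < h) (htop : d (n + 1) < h) (hmn : m ≤ n)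
    (hhm : h ≤ d m) : ∃ i j, 1 ≤ i ∧ i ≤ m ∧ m ≤ j ∧ j ≤ n ∧ IsLevelRun d h i j := by
  set p := Nat.findGreatest (fun k => d k < h) m
  have hp : d p < h := Nat.findGreatest_spec (P := fun k => d k < h) (Nat.zero_le m) h0
  have hpm : p < m := lt_of_le_of_ne (Nat.findGreatest_le m) fun he => by
    rw [he] at hp; omega
  have hex : ∃ k, m < k ∧ d k < h := ⟨n + 1, by omega, htop⟩
  obtain ⟨hmr, hr⟩ := Nat.find_spec hex
  have hrn : Nat.find hex ≤ n + 1 := Nat.find_min' hex ⟨by omega, htop⟩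
  refine ⟨p + 1, Nat.find hex - 1, by omega, hpm, by omega, by omega, by simpa using hp,
    by rwa [Nat.sub_add_cancel (by omega)], fun k hk1 hk2 => ?_⟩
  rcases le_or_gt k m with hkm | hkm
  · exact not_lt.1 (Nat.findGreatest_is_greatest (P := fun k => d k < h) (by omega) hkm)
  · exact not_lt.1 fun hk => Nat.find_min hex (by omega : k < Nat.find hex) ⟨hkm, hk⟩

lemma sum_ite_isLevelRun {h m n : ℕ} (h0 : d 0 < h) (htop : d (n + 1) < h) (hmn : m ≤ n)
    (hhm : h ≤ d m) :
    ∑ i ∈ Icc 1 n, ∑ j ∈ Icc i n,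
      (if i ≤ m ∧ m ≤ j ∧ IsLevelRun d h i j then 1 else 0) = 1 := by
  obtain ⟨i₀, j₀, hi₀, hi₀m, hj₀m, hj₀, hrun⟩ := exists_isLevelRun h0 htop hmn hhm
  have hunique : ∀ i j, (i ≤ m ∧ m ≤ j ∧ IsLevelRun d h i j) ↔ i = i₀ ∧ j = j₀ := by
    refine fun i j => ⟨fun ⟨him, hmj, hr⟩ => hr.eq_of_mem hrun ⟨him, hmj⟩ ⟨hi₀m, hj₀m⟩, ?_⟩
    rintro ⟨rfl, rfl⟩
    exact ⟨hi₀m, hj₀m, hrun⟩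
  rw [sum_eq_single_of_mem i₀ (by simp; omega) fun i _ hi =>
    sum_eq_zero fun j _ => if_neg fun hij => hi ((hunique i j).1 hij).1]
  rw [sum_eq_single_of_mem j₀ (by simp; omega) fun j _ hj =>
    if_neg fun hij => hj ((hunique i₀ j).1 hij).2]
  simp [hunique]

theorem sum_kij_mul_ite {m n : ℕ} (hd0 : d 0 = 0) (hdtop : d (n + 1) = 0) :
    ∑ i ∈ Icc 1 n, ∑ j ∈ Icc i n, kij d i j * (if i ≤ m ∧ m ≤ j then 1 else 0) =
      if m ∈ Icc 1 n then d m else 0 := by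
  split_ifs with hm
  · rw [mem_Icc] at hm
    calc ∑ i ∈ Icc 1 n, ∑ j ∈ Icc i n, kij d i j * (if i ≤ m ∧ m ≤ j then 1 else 0)
        = ∑ i ∈ Icc 1 n, ∑ j ∈ Icc i n, ∑ h ∈ Icc 1 (d m),
            (if i ≤ m ∧ m ≤ j ∧ IsLevelRun d h i j then 1 else 0) := by
          refine sum_congr rfl fun i _ => sum_congr rfl fun j _ => ?_
          by_cases him : i ≤ m ∧ m ≤ j
          · rw [← card_filter_isLevelRun him.1 him.2, card_filter]
            simp [him]
          · rw [if_neg him, mul_zero]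
            exact (sum_eq_zero fun h _ => if_neg fun hh => him ⟨hh.1, hh.2.1⟩).symm
      _ = ∑ h ∈ Icc 1 (d m), ∑ i ∈ Icc 1 n, ∑ j ∈ Icc i n,
            (if i ≤ m ∧ m ≤ j ∧ IsLevelRun d h i j then 1 else 0) := by
          rw [sum_congr rfl fun i _ => sum_comm, sum_comm]
      _ = ∑ h ∈ Icc 1 (d m), 1 := sum_congr rfl fun h hh => by
          rw [mem_Icc] at hh
          exact sum_ite_isLevelRun (by omega) (by omega) hm.2 hh.2
      _ = d m := by simp
  · refine sum_eq_zero fun i hi => sum_eq_zero fun j hj => ?_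
    rw [mem_Icc] at hm hi hj
    rw [if_neg (by omega), mul_zero]

end LevelRuns

lemma lt_of_ordConnected_union_Ico {p L p' L' : ℕ} (hpp' : p ≤ p')
    (h₁ : ¬ Set.Ico p (p + L) ⊆ Set.Ico p' (p' + L'))
    (h₂ : ¬ Set.Ico p' (p' + L') ⊆ Set.Ico p (p + L))
    (hU : (Set.Ico p (p + L) ∪ Set.Ico p' (p' + L')).OrdConnected) :
    p < p' ∧ p' ≤ p + L ∧ p + L < p' + L' := by
  have hL : 0 < L := Nat.pos_of_ne_zero fun h => h₁ (by simp [h])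
  have hL' : 0 < L' := Nat.pos_of_ne_zero fun h => h₂ (by simp [h])
  rw [Set.Ico_subset_Ico_iff (by omega)] at h₁ h₂
  refine ⟨by omega, not_lt.1 fun hgap => ?_, by omega⟩
  have hmem := hU.out (Or.inl (Set.left_mem_Ico.2 (by omega)))
    (Or.inr (Set.left_mem_Ico.2 (by omega))) ⟨Nat.le_add_right p L, hgap.le⟩
  simp only [Set.mem_union, Set.mem_Ico] at hmem
  omega

section QStrings

variable {q : ℂˣ}

lemma qString_eq_image_s5 (a : ℂˣ) (L p : ℕ) :
    qString q L (q ^ (2 * p) * a) = (fun m : ℕ => q ^ (2 * m) * a) '' Set.Ico p (p + L) := by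
  ext c
  constructor
  · rintro ⟨k, hk, rfl⟩
    exact ⟨k + p, ⟨by omega, by omega⟩, by dsimp only; rw [mul_add, pow_add, mul_assoc]⟩
  · rintro ⟨m, ⟨hpm, hmL⟩, rfl⟩
    refine ⟨m - p, by omega, ?_⟩
    rw [← mul_assoc, ← pow_add, ← mul_add, Nat.sub_add_cancel hpm]

lemma injective_pow_two_mul (hq : ∀ k : ℕ, 1 ≤ k → q ^ k ≠ 1) (a : ℂˣ) :
    Injective fun m : ℕ => q ^ (2 * m) * a := by
  have hpow : Injective fun k : ℕ => q ^ k :=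
    injective_pow_iff_not_isOfFinOrder.2 fun h =>
      let ⟨k, hk, hk1⟩ := isOfFinOrder_iff_pow_eq_one.1 h
      hq k hk hk1
  exact fun m m' h => by simpa using hpow (mul_right_cancel h)

lemma SpecialPosition.ordConnected (hq : ∀ k : ℕ, 1 ≤ k → q ^ k ≠ 1) {a : ℂˣ} {L p L' p' : ℕ}
    (h : SpecialPosition q L (q ^ (2 * p) * a) L' (q ^ (2 * p') * a)) :
    ¬ Set.Ico p (p + L) ⊆ Set.Ico p' (p' + L') ∧ ¬ Set.Ico p' (p' + L') ⊆ Set.Ico p (p + L) ∧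
      (Set.Ico p (p + L) ∪ Set.Ico p' (p' + L')).OrdConnected := by
  have he := injective_pow_two_mul hq a
  obtain ⟨h₁, h₂, k, c, hk, hU⟩ := h
  have hc : c ∈ qString q k c := ⟨0, hk, by simp⟩
  rw [← hU, qString_eq_image_s5, qString_eq_image_s5, ← Set.image_union] at hc
  obtain ⟨t, -, rfl⟩ := hc
  simp only [qString_eq_image_s5, Set.image_subset_image_iff he] at h₁ h₂ hU
  rw [← Set.image_union, (Set.image_injective.2 he).eq_iff] at hU
  exact ⟨h₁, h₂, hU ▸ Set.ordConnected_Ico⟩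

theorem generalPosition_of_kij_pos (hq : ∀ k : ℕ, 1 ≤ k → q ^ k ≠ 1) (a : ℂˣ) {d : ℕ → ℕ}
    {i j r s : ℕ} (hij : i ≤ j) (hrs : r ≤ s) (hi : 0 < kij d i j) (hr : 0 < kij d r s) :
    GeneralPosition q (j - i + 1) (q ^ (2 * i) * a) (s - r + 1) (q ^ (2 * r) * a) := by
  intro hsp
  obtain ⟨h₁, h₂, hU⟩ := hsp.ordConnected hq
  rcases le_total i r with hir | hri
  · obtain ⟨_, _, _⟩ := lt_of_ordConnected_union_Ico hir h₁ h₂ hU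
    exact not_kij_pos_of_linked (by omega) (by omega) (by omega) hi hr
  · obtain ⟨_, _, _⟩ := lt_of_ordConnected_union_Ico hri h₂ h₁ (Set.union_comm _ _ ▸ hU)
    exact not_kij_pos_of_linked (by omega) (by omega) (by omega) hr hi

end QStrings

theorem kij_decomposition_general (q : ℂˣ) (hq : ∀ k : ℕ, 1 ≤ k → q ^ k ≠ 1) (a : ℂˣ)
    (n : ℕ) (d : ℕ → ℕ) (hd0 : d 0 = 0) (hdtop : d (n + 1) = 0) :
    (∀ c : ℂˣ,
      (∑ i ∈ Finset.Icc 1 n, ∑ j ∈ Finset.Icc i n,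
        kij d i j * (if c ∈ qString q (j - i + 1) (q ^ (2 * i) * a) then 1 else 0)) =
      ∑ m ∈ Finset.Icc 1 n, d m * (if c = q ^ (2 * m) * a then 1 else 0)) ∧
    (∀ i j r s : ℕ, 1 ≤ i → i ≤ j → j ≤ n → 1 ≤ r → r ≤ s → s ≤ n →
      (i, j) ≠ (r, s) → 0 < kij d i j → 0 < kij d r s →
      GeneralPosition q (j - i + 1) (q ^ (2 * i) * a) (s - r + 1) (q ^ (2 * r) * a)) := by
  refine ⟨fun c => ?_, fun i j r s _ hij _ _ hrs _ _ hi hr =>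
    generalPosition_of_kij_pos hq a hij hrs hi hr⟩
  have he := injective_pow_two_mul hq a
  by_cases hc : c ∈ Set.range fun m : ℕ => q ^ (2 * m) * a
  · obtain ⟨m, rfl⟩ := hc
    calc _ = ∑ i ∈ Icc 1 n, ∑ j ∈ Icc i n, kij d i j * (if i ≤ m ∧ m ≤ j then 1 else 0) := by
          refine sum_congr rfl fun i _ => sum_congr rfl fun j hj => ?_
          rw [mem_Icc] at hj
          simp only [qString_eq_image_s5, he.mem_set_image, Set.mem_Ico,
            show m < i + (j - i + 1) ↔ m ≤ j by omega]
      _ = _ := by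
          rw [sum_kij_mul_ite hd0 hdtop]
          simp only [he.eq_iff, mul_boole, sum_ite_eq]
  · have hnot : ∀ L p, c ∉ qString q L (q ^ (2 * p) * a) := fun L p hcL =>
      hc (Set.image_subset_range _ _ (qString_eq_image_s5 a L p ▸ hcL))
    have hne : ∀ m, c ≠ q ^ (2 * m) * a := fun m h => hc ⟨m, h.symm⟩
    simp [hnot, hne]

/-- (a) The multiset consisting, for each `1 ≤ i ≤ j ≤ n`, of `k_{ij}` copies of the
`q`-string `S_{j-i+1, q^{2i}a}` has multiset union the multiset of `d_m` copies of
`q^{2m}a` (`m = 1,…,n`); (b) for distinct pairs `(i,j) ≠ (r,s)` with `k_{ij}, k_{rs} > 0`,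
the strings `S_{j-i+1, q^{2i}a}` and `S_{s-r+1, q^{2r}a}` are in general position. -/
theorem kij_decomposition (q : ℂˣ) (hq : ∀ k : ℕ, 1 ≤ k → q ^ k ≠ 1) (a : ℂˣ)
    (n : ℕ) (hn : 1 ≤ n) (d : ℕ → ℕ) (hd0 : d 0 = 0) (hdtop : d (n + 1) = 0) :
    (∀ c : ℂˣ,
      (∑ i ∈ Finset.Icc 1 n, ∑ j ∈ Finset.Icc i n,
        kij d i j * (if c ∈ qString q (j - i + 1) (q ^ (2 * i) * a) then 1 else 0)) =
      ∑ m ∈ Finset.Icc 1 n, d m * (if c = q ^ (2 * m) * a then 1 else 0)) ∧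
    (∀ i j r s : ℕ, 1 ≤ i → i ≤ j → j ≤ n → 1 ≤ r → r ≤ s → s ≤ n →
      (i, j) ≠ (r, s) → 0 < kij d i j → 0 < kij d r s →
      GeneralPosition q (j - i + 1) (q ^ (2 * i) * a) (s - r + 1) (q ^ (2 * r) * a)) :=
  kij_decomposition_general q hq a n d hd0 hdtop
end

section
/- Let W⁰,…,W^{n-1} be finite-dimensional ℂ-vector spaces of dimensions w₀,…,w_{n-1}, and let Com(W_*) denote the set of tuples (f₀,…,f_{n-2}) of linear maps f_i : Wⁱ → W^{i+1} with f_{i+1} ∘ f_i = 0 for all 0 ≤ i ≤ n-3, viewed as a subset of the finite-dimensional ℂ-vector space ∏_{i=0}^{n-2} Hom(Wⁱ, W^{i+1}) with its standard topology. Let r, r' ∈ ℕ^{n-1} both satisfy r_{i-1} + r_i ≤ w_i and r'_{i-1} + r'_i ≤ w_i for all 0 ≤ i ≤ n-1 (convention r_{-1} = r_{n-1} = r'_{-1} = r'_{n-1} = 0), and let O(r) = {f ∈ Com(W_*) : rank(f_i) = r_i for all i} and similarly O(r'). Then O(r') is contained in the topological closure of O(r) if and only if r'_i ≤ r_i for all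 0 ≤ i ≤ n-2. -/
/-- The variety of complexes: tuples `(f₀,…,f_{n-2})` of linear maps
`f_i : Wⁱ → W^{i+1}` (realized as matrices, with `Wⁱ = ℂ^{wᵢ}`) satisfying
`f_{i+1} ∘ f_i = 0`, inside the product of the Hom-spaces. -/
def ComVariety (n : ℕ) (w : ℕ → ℕ) :
    Set (∀ i : ℕ, Matrix (Fin (w (i + 1))) (Fin (w i)) ℂ) :=
  {f | ∀ i, i + 3 ≤ n → f (i + 1) * f i = 0}

/-- The stratum `O(r)` of the variety of complexes consisting of complexes with
`rank f_i = r_i` for all `0 ≤ i ≤ n-2`. -/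
def ComStratum (n : ℕ) (w r : ℕ → ℕ) :
    Set (∀ i : ℕ, Matrix (Fin (w (i + 1))) (Fin (w i)) ℂ) :=
  {f | f ∈ ComVariety n w ∧ ∀ i, i + 2 ≤ n → (f i).rank = r i}

/-!
Ranks can only drop in the limit, because `{A | rank A ≤ d}` is closed; together with the
nonemptiness of every admissible stratum this gives `r' ≤ r`.

Conversely, a complex `f` with ranks `r' ≤ r` is the limit as `t → 0` of `f + t • g` with
`g_i = B_{i+1} ∘ P_i`, built one vertex at a time: `P_j` kills `im f_{j-1}` and maps `ker f_j`
onto `ℂ^{r_j - r'_j}`, while `B_j` embeds `ℂ^{r_{j-1} - r'_{j-1}}` into `ker f_j`, transversally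
to `im f_{j-1}` and inside `ker P_j`. Admissibility of `r` is exactly what leaves room for both
in `ker f_j / im f_{j-1}`. Then `f + t • g` is again a complex and
`im (f_i + t g_i) = im f_i ⊕ im B_{i+1}` has dimension `r_i`.
-/

open Module Submodule LinearMap Matrix Topology

section VectorSpace

variable {k U V W X X' Y : Type*} [Field k] [AddCommGroup U] [Module k U]
  [AddCommGroup V] [Module k V] [AddCommGroup W] [Module k W]
  [AddCommGroup X] [Module k X] [AddCommGroup X'] [Module k X'] [AddCommGroup Y] [Module k Y]

theorem LinearMap.exists_surjective_of_finrank_le [FiniteDimensional k V] [FiniteDimensional k X]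
    (h : finrank k X ≤ finrank k V) :
    ∃ ψ : V →ₗ[k] X, Function.Surjective ψ := by
  obtain ⟨ι, hι⟩ := finrank_le_iff_exists_linearMap.mp h
  obtain ⟨ψ, hψ⟩ := ι.exists_leftInverse_of_injective (ker_eq_bot.mpr hι)
  exact ⟨ψ, fun x => ⟨ι x, LinearMap.congr_fun hψ x⟩⟩

theorem Submodule.exists_le_ker_map_eq_top [FiniteDimensional k V] [FiniteDimensional k X]
    {R K : Submodule k V} (hRK : R ≤ K) (h : finrank k R + finrank k X ≤ finrank k K) :
    ∃ Φ : V →ₗ[k] X, R ≤ ker Φ ∧ K.map Φ = ⊤ := by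
  set R' := R.comap K.subtype
  have hR' : finrank k R' = finrank k R := (comapSubtypeEquivOfLe hRK).finrank_eq
  have hquot := R'.finrank_quotient_add_finrank
  obtain ⟨ψ, hψ⟩ :=
    LinearMap.exists_surjective_of_finrank_le (k := k) (V := K ⧸ R') (X := X) (by omega)
  obtain ⟨Φ, hΦ⟩ := LinearMap.exists_extend (ψ ∘ₗ R'.mkQ)
  refine ⟨Φ, fun x hx => ?_, ?_⟩
  · have hΦx : Φ x = ψ (R'.mkQ ⟨x, hRK hx⟩) := LinearMap.congr_fun hΦ ⟨x, hRK hx⟩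
    rw [mem_ker, hΦx, mkQ_apply, (Quotient.mk_eq_zero R').mpr hx, map_zero]
  · rw [← range_subtype K, ← range_comp, hΦ, range_eq_top]
    exact hψ.comp R'.mkQ_surjective

theorem Submodule.exists_perturbation_pair [FiniteDimensional k V] [FiniteDimensional k X]
    [FiniteDimensional k Y] {R K : Submodule k V} (hRK : R ≤ K)
    (h : finrank k R + finrank k X + finrank k Y ≤ finrank k K) :
    ∃ (P : V →ₗ[k] X) (B : Y →ₗ[k] V), R ≤ ker P ∧ P ∘ₗ B = 0 ∧ range B ≤ K ∧
      K.map P = ⊤ ∧ ∀ y, B y ∈ R → y = 0 := by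
  obtain ⟨Φ, hRΦ, hKΦ⟩ :=
    exists_le_ker_map_eq_top (X := X × Y) hRK (by rw [finrank_prod]; omega)
  obtain ⟨σ, hσ⟩ := (Φ ∘ₗ K.subtype).exists_rightInverse_of_surjective
    (by rw [range_comp, range_subtype, hKΦ])
  have hΦB : ∀ y, Φ (σ (0, y)) = (0, y) := fun y => LinearMap.congr_fun hσ (0, y)
  refine ⟨LinearMap.fst k X Y ∘ₗ Φ, K.subtype ∘ₗ σ ∘ₗ LinearMap.inr k X Y,
    hRΦ.trans (ker_le_ker_comp _ _), ?_, ?_, ?_, fun y hy => ?_⟩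
  · ext y
    simp [hΦB]
  · rw [range_comp]
    exact map_le_range.trans (range_subtype K).le
  · rw [map_comp, hKΦ, map_top, range_eq_top]
    exact fun x => ⟨(x, 0), rfl⟩
  · have h0 : Φ (σ (0, y)) = 0 := hRΦ hy
    simpa [hΦB] using h0

theorem LinearMap.range_add_smul_comp {f : V →ₗ[k] W} {P : V →ₗ[k] X} {B : X →ₗ[k] W} {t : k}
    (ht : t ≠ 0) (hP : (ker f).map P = ⊤) :
    range (f + t • B ∘ₗ P) = range f ⊔ range B := by
  have hB : range B ≤ range (f + t • B ∘ₗ P) := by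
    rintro _ ⟨x, rfl⟩
    obtain ⟨v, hv, rfl⟩ : x ∈ (ker f).map P := hP ▸ mem_top
    refine ⟨t⁻¹ • v, ?_⟩
    simp [mem_ker.mp hv, smul_smul, ht]
  refine le_antisymm ?_ (sup_le ?_ hB)
  · rintro _ ⟨v, rfl⟩
    exact add_mem (mem_sup_left (mem_range_self f v)) (mem_sup_right ⟨t • P v, by simp⟩)
  · rintro _ ⟨v, rfl⟩
    have := sub_mem (mem_range_self (f + t • B ∘ₗ P) v) (hB (mem_range_self B (t • P v)))
    simpa using this

theorem LinearMap.finrank_range_add_smul_comp [FiniteDimensional k W] {f : V →ₗ[k] W}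
    {P : V →ₗ[k] X} {B : X →ₗ[k] W} {t : k} (ht : t ≠ 0) (hP : (ker f).map P = ⊤)
    (hB : ∀ x, B x ∈ range f → x = 0) :
    finrank k (range (f + t • B ∘ₗ P)) = finrank k (range f) + finrank k X := by
  have hdisj : range f ⊓ range B = ⊥ := by
    rw [eq_bot_iff]
    rintro _ ⟨hf, x, rfl⟩
    rw [hB x hf, map_zero]
    exact zero_mem _
  have hinj : Function.Injective B := by
    rw [← ker_eq_bot, eq_bot_iff]
    exact fun x hx => hB x (by rw [mem_ker.mp hx]; exact zero_mem _)
  have := finrank_sup_add_finrank_inf_eq (range f) (range B)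
  rw [hdisj, finrank_bot, finrank_range_of_inj hinj] at this
  rw [range_add_smul_comp ht hP]
  omega

theorem LinearMap.add_smul_comp_comp_add_smul_comp_eq_zero {f : U →ₗ[k] V} {f' : V →ₗ[k] W}
    {P : U →ₗ[k] X} {B : X →ₗ[k] V} {P' : V →ₗ[k] X'} {B' : X' →ₗ[k] W} (t : k)
    (hff : f' ∘ₗ f = 0) (hfB : f' ∘ₗ B = 0) (hPf : P' ∘ₗ f = 0) (hPB : P' ∘ₗ B = 0) :
    (f' + t • B' ∘ₗ P') ∘ₗ (f + t • B ∘ₗ P) = 0 := by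
  ext u
  have h1 : f' (f u) = 0 := LinearMap.congr_fun hff u
  have h2 : f' (B (P u)) = 0 := LinearMap.congr_fun hfB (P u)
  have h3 : P' (f u) = 0 := LinearMap.congr_fun hPf u
  have h4 : P' (B (P u)) = 0 := LinearMap.congr_fun hPB (P u)
  simp [h1, h2, h3, h4]

end VectorSpace

theorem LinearMap.exists_perturbation_of_finrank_range_le {k : Type*} [Field k]
    {V : ℕ → Type*} [∀ i, AddCommGroup (V i)] [∀ i, Module k (V i)]
    [∀ i, FiniteDimensional k (V i)] (f : ∀ i, V i →ₗ[k] V (i + 1))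
    (hf : ∀ i, f (i + 1) ∘ₗ f i = 0) (r : ℕ → ℕ) (hle : ∀ i, finrank k (range (f i)) ≤ r i)
    (h0 : r 0 ≤ finrank k (V 0)) (hr : ∀ i, r i + r (i + 1) ≤ finrank k (V (i + 1))) :
    ∃ g : ∀ i, V i →ₗ[k] V (i + 1), ∀ t : k, t ≠ 0 → ∀ i,
      (f (i + 1) + t • g (i + 1)) ∘ₗ (f i + t • g i) = 0 ∧
        finrank k (range (f i + t • g i)) = r i := by
  let p : ℕ → ℕ := fun i => r i - finrank k (range (f i))
  -- At the vertex `j`, `R j` is the image of the incoming map and `q j` the rank of the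
  -- incoming perturbation.
  let q : ℕ → ℕ := fun | 0 => 0 | i + 1 => p i
  let R : ∀ j, Submodule k (V j) := fun | 0 => ⊥ | i + 1 => range (f i)
  have hRK : ∀ j, R j ≤ ker (f j) := fun
    | 0 => bot_le
    | i + 1 => range_le_ker_iff.mpr (hf i)
  have hdim : ∀ j, finrank k (R j) + finrank k (Fin (p j) → k) + finrank k (Fin (q j) → k) ≤
      finrank k (ker (f j)) := by
    intro j
    have hnull := (f j).finrank_range_add_finrank_ker
    have hle_j := hle j
    cases j with
    | zero =>
      simp only [R, q, p, finrank_bot, finrank_fin_fun]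
      omega
    | succ i =>
      simp only [R, q, p, finrank_fin_fun]
      have hle_i := hle i
      have hr_i := hr i
      omega
  choose P B hPR hPB hBK hPK hBR using fun j => exists_perturbation_pair (hRK j) (hdim j)
  refine ⟨fun i => B (i + 1) ∘ₗ P i, fun t ht i => ⟨?_, ?_⟩⟩
  · exact add_smul_comp_comp_add_smul_comp_eq_zero t (hf i)
      (range_le_ker_iff.mp (hBK (i + 1))) (range_le_ker_iff.mp (hPR (i + 1))) (hPB (i + 1))
  · rw [finrank_range_add_smul_comp ht (hPK i) (hBR (i + 1)), finrank_fin_fun]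
    exact Nat.add_sub_of_le (hle i)

theorem Matrix.isClosed_setOf_rank_le {𝕜 m n : Type*} [NontriviallyNormedField 𝕜]
    [CompleteSpace 𝕜] [Fintype m] [Fintype n] [DecidableEq n] (d : ℕ) :
    IsClosed {A : Matrix m n 𝕜 | A.rank ≤ d} := by
  let Φ : Matrix m n 𝕜 →ₗ[𝕜] (n → 𝕜) →L[𝕜] (m → 𝕜) :=
    LinearMap.toContinuousLinearMap.toLinearMap ∘ₗ Matrix.toLin'.toLinearMap
  have hopen := (isOpen_setOfPred_nat_le_rank (𝕜 := 𝕜) (E := n → 𝕜) (F := m → 𝕜)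
    (d + 1)).preimage Φ.continuous_of_finiteDimensional
  convert hopen.isClosed_compl using 1
  ext A
  change finrank 𝕜 (range (toLin' A)) ≤ d ↔ ¬((d + 1 : ℕ) : Cardinal) ≤ (toLin' A).rank
  rw [LinearMap.rank, ← finrank_eq_rank, Nat.cast_le, not_le, Nat.lt_succ_iff]

theorem exists_perturbation_mem_comStratum {n : ℕ} {w r r' : ℕ → ℕ} (hadm0 : r 0 ≤ w 0)
    (hadm : ∀ i, 1 ≤ i → i ≤ n - 1 → r (i - 1) + r i ≤ w i)
    (hle : ∀ i, i + 2 ≤ n → r' i ≤ r i) {f : ∀ i : ℕ, Matrix (Fin (w (i + 1))) (Fin (w i)) ℂ}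
    (hf : f ∈ ComStratum n w r') :
    ∃ g : ∀ i : ℕ, Matrix (Fin (w (i + 1))) (Fin (w i)) ℂ,
      ∀ t : ℂ, t ≠ 0 → (fun i => f i + t • g i) ∈ ComStratum n w r := by
  obtain ⟨hcplx, hrank⟩ := hf
  -- Replacing `f_i` by `0` for `i ≥ n - 1` gives a complex indexed by all of `ℕ`, and a rank
  -- bound `s` that is admissible at every vertex.
  let F : ∀ i, (Fin (w i) → ℂ) →ₗ[ℂ] (Fin (w (i + 1)) → ℂ) :=
    fun i => if i + 2 ≤ n then toLin' (f i) else 0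
  let s : ℕ → ℕ := fun i => if i + 2 ≤ n then r i else 0
  have hF : ∀ i, i + 2 ≤ n → F i = toLin' (f i) := fun i hi => if_pos hi
  have hFcplx : ∀ i, F (i + 1) ∘ₗ F i = 0 := by
    intro i
    by_cases hi : i + 3 ≤ n
    · rw [hF i (by omega), hF (i + 1) (by omega), ← toLin'_mul, hcplx i hi, map_zero]
    · simp [F, show ¬i + 1 + 2 ≤ n by omega]
  have hFrank : ∀ i, finrank ℂ (range (F i)) ≤ s i := by
    intro i
    by_cases hi : i + 2 ≤ n
    · rw [hF i hi]
      simp only [s, if_pos hi]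
      exact (hrank i hi).trans_le (hle i hi)
    · simp [F, s, hi]
  have hs0 : s 0 ≤ finrank ℂ (Fin (w 0) → ℂ) := by
    simp only [s, finrank_fin_fun]
    split_ifs <;> omega
  have hs : ∀ i, s i + s (i + 1) ≤ finrank ℂ (Fin (w (i + 1)) → ℂ) := by
    intro i
    have := hadm (i + 1)
    simp only [s, finrank_fin_fun, add_tsub_cancel_right] at this ⊢
    split_ifs <;> omega
  obtain ⟨g, hg⟩ := exists_perturbation_of_finrank_range_le F hFcplx s hFrank hs0 hs
  have hlin : ∀ (t : ℂ) i, i + 2 ≤ n → toLin' (f i + t • toMatrix' (g i)) = F i + t • g i := by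
    intro t i hi
    rw [map_add, map_smul, toLin'_toMatrix', hF i hi]
  refine ⟨fun i => toMatrix' (g i), fun t ht => ⟨fun i hi => ?_, fun i hi => ?_⟩⟩
  · apply toLin'.injective
    rw [toLin'_mul, hlin t i (by omega), hlin t (i + 1) (by omega), (hg t ht i).1, map_zero]
  · change finrank ℂ (range (toLin' (f i + t • toMatrix' (g i)))) = r i
    rw [hlin t i hi, (hg t ht i).2]
    exact if_pos hi

theorem comStratum_nonempty {n : ℕ} {w r : ℕ → ℕ} (hadm0 : r 0 ≤ w 0)
    (hadm : ∀ i, 1 ≤ i → i ≤ n - 1 → r (i - 1) + r i ≤ w i) : (ComStratum n w r).Nonempty := by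
  have hzero : 0 ∈ ComStratum n w 0 := ⟨fun i _ => Matrix.zero_mul _, fun i _ => rank_zero⟩
  obtain ⟨g, hg⟩ := exists_perturbation_mem_comStratum hadm0 hadm (fun i _ => Nat.zero_le _) hzero
  exact ⟨_, hg 1 one_ne_zero⟩

theorem closure_comStratum_subset (n : ℕ) (w r : ℕ → ℕ) :
    closure (ComStratum n w r) ⊆ {f | ∀ i, i + 2 ≤ n → (f i).rank ≤ r i} := by
  refine closure_minimal (fun f hf i hi => (hf.2 i hi).le) ?_
  simp only [Set.ofPred_forall]
  refine isClosed_iInter fun i => isClosed_iInter fun _ => ?_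
  exact (isClosed_setOf_rank_le (r i)).preimage
    (continuous_apply (A := fun i => Matrix (Fin (w (i + 1))) (Fin (w i)) ℂ) i)

theorem stratum_subset_closure_iff_general (n : ℕ) (w r r' : ℕ → ℕ)
    (hadm0 : r 0 ≤ w 0)
    (hadm : ∀ i, 1 ≤ i → i ≤ n - 1 → r (i - 1) + r i ≤ w i)
    (hadm0' : r' 0 ≤ w 0)
    (hadm' : ∀ i, 1 ≤ i → i ≤ n - 1 → r' (i - 1) + r' i ≤ w i) :
    ComStratum n w r' ⊆ closure (ComStratum n w r) ↔
      ∀ i, i + 2 ≤ n → r' i ≤ r i := by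
  constructor
  · intro hsub i hi
    obtain ⟨f, hf⟩ := comStratum_nonempty hadm0' hadm'
    exact hf.2 i hi ▸ closure_comStratum_subset n w r (hsub hf) i hi
  · intro hle f hf
    obtain ⟨g, hg⟩ := exists_perturbation_mem_comStratum hadm0 hadm hle hf
    have hcont : Continuous fun t : ℂ => fun i => f i + t • g i := by fun_prop
    have hlim : Filter.Tendsto (fun t : ℂ => fun i => f i + t • g i) (𝓝[≠] 0) (𝓝 f) := by
      simpa using (hcont.tendsto 0).mono_left nhdsWithin_le_nhds
    exact mem_closure_of_tendsto hlim (eventually_nhdsWithin_of_forall hg)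

/-- For admissible rank tuples `r, r'` (i.e. `r_{i-1} + r_i ≤ w_i` for `0 ≤ i ≤ n-1`
with the conventions `r_{-1} = r_{n-1} = 0`, encoded by `hrtop, hadm0, hadm` and the
primed versions), the stratum `O(r')` is contained in the topological closure of the
stratum `O(r)` iff `r'_i ≤ r_i` for all `0 ≤ i ≤ n-2`. -/
theorem stratum_subset_closure_iff (n : ℕ) (hn : 1 ≤ n) (w r r' : ℕ → ℕ)
    (hrtop : r (n - 1) = 0) (hadm0 : r 0 ≤ w 0)
    (hadm : ∀ i, 1 ≤ i → i ≤ n - 1 → r (i - 1) + r i ≤ w i)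
    (hrtop' : r' (n - 1) = 0) (hadm0' : r' 0 ≤ w 0)
    (hadm' : ∀ i, 1 ≤ i → i ≤ n - 1 → r' (i - 1) + r' i ≤ w i) :
    ComStratum n w r' ⊆ closure (ComStratum n w r) ↔
      ∀ i, i + 2 ≤ n → r' i ≤ r i :=
  stratum_subset_closure_iff_general n w r r' hadm0 hadm hadm0' hadm'
end

section
/- Let W⁰,…,W^{n-1} be finite-dimensional ℂ-vector spaces and let (f₀,…,f_{n-2}) and (f'₀,…,f'_{n-2}) be two tuples of linear maps f_i, f'_i : Wⁱ → W^{i+1} satisfying f_{i+1} ∘ f_i = 0 and f'_{i+1} ∘ f'_i = 0 for all 0 ≤ i ≤ n-3. Then there exist invertible linear maps g_i ∈ GL(Wⁱ) for 0 ≤ i ≤ n-1 with f'_i = g_{i+1} ∘ f_i ∘ g_i⁻¹ for all 0 ≤ i ≤ n-2 if and only if rank(f_i) = rank(f'_i) for all 0 ≤ i ≤ n-2. -/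
/-!
The automorphisms `g i` are built one at a time, keeping the invariant
`g i (ker f i) = ker f' i`. Given `g i`, it descends to `W i ⧸ ker f i ≃ W i ⧸ ker f' i`, that is,
to an isomorphism `range f i ≃ range f' i`. As `range f i ≤ ker f (i + 1)`,
`range f' i ≤ ker f' (i + 1)`, and these kernels have equal dimension by rank–nullity, that
isomorphism extends to an automorphism `g (i + 1)` of `W (i + 1)` carrying `ker f (i + 1)` onto
`ker f' (i + 1)`; by construction `g (i + 1) ∘ f i = f' i ∘ g i`.
-/

open Module Submodule

namespace Submodule

variable {K V V' : Type*} [DivisionRing K] [AddCommGroup V] [Module K V]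
  [AddCommGroup V'] [Module K V']

theorem map_eq_of_restrict_eq {p : Submodule K V} {p' : Submodule K V'} (e : p ≃ₗ[K] p')
    (G : V ≃ₗ[K] V') (h : ∀ x : p, e x = G x) : p.map G.toLinearMap = p' := by
  ext y
  refine ⟨?_, fun hy => ⟨e.symm ⟨y, hy⟩, (e.symm ⟨y, hy⟩).2, ?_⟩⟩
  · rintro ⟨x, hx, rfl⟩
    simp [← h ⟨x, hx⟩]
  · simp [← h]

theorem exists_linearEquiv_restrict_eq_of_finrank_eq [FiniteDimensional K V]
    [FiniteDimensional K V'] {p : Submodule K V} {p' : Submodule K V'} (e : p ≃ₗ[K] p')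
    (h : finrank K V = finrank K V') : ∃ G : V ≃ₗ[K] V', ∀ x : p, e x = G x := by
  obtain ⟨q, hq⟩ := p.exists_isCompl
  obtain ⟨q', hq'⟩ := p'.exists_isCompl
  have hqq' : finrank K q = finrank K q' := by
    have := finrank_add_eq_of_isCompl hq
    have := finrank_add_eq_of_isCompl hq'
    have := e.finrank_eq
    omega
  refine ⟨(p.prodEquivOfIsCompl q hq).symm ≪≫ₗ e.prodCongr (.ofFinrankEq _ _ hqq') ≪≫ₗ
    p'.prodEquivOfIsCompl q' hq', fun x => ?_⟩
  simp

theorem exists_linearEquiv_restrict_eq_map_eq [FiniteDimensional K V]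
    {p p' k k' : Submodule K V} (hp : p ≤ k) (hp' : p' ≤ k') (e : p ≃ₗ[K] p')
    (hk : finrank K k = finrank K k') :
    ∃ G : V ≃ₗ[K] V, (∀ x : p, e x = G x) ∧ k.map G.toLinearMap = k' := by
  let eₖ : p.comap k.subtype ≃ₗ[K] p'.comap k'.subtype :=
    comapSubtypeEquivOfLe hp ≪≫ₗ e ≪≫ₗ (comapSubtypeEquivOfLe hp').symm
  obtain ⟨e', he'⟩ := exists_linearEquiv_restrict_eq_of_finrank_eq eₖ hk
  obtain ⟨G, hG⟩ := exists_linearEquiv_restrict_eq e'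
  refine ⟨G, fun x => ?_, map_eq_of_restrict_eq e' G hG⟩
  have h := he' ⟨⟨x, hp x.2⟩, x.2⟩
  rw [show (x : V) = ((⟨x, hp x.2⟩ : k) : V) from rfl, ← hG, ← h]
  simp [eₖ, comapSubtypeEquivOfLe]

end Submodule

namespace LinearMap

variable {K V V' U : Type*} [DivisionRing K] [AddCommGroup V] [Module K V]
  [AddCommGroup V'] [Module K V'] [AddCommGroup U] [Module K U]

theorem finrank_ker_eq_of_finrank_range_eq [FiniteDimensional K V] {a a' : V →ₗ[K] U}
    (h : finrank K (range a) = finrank K (range a')) :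
    finrank K (ker a) = finrank K (ker a') := by
  have := finrank_range_add_finrank_ker a
  have := finrank_range_add_finrank_ker a'
  omega

theorem exists_linearEquiv_comp_eq_comp [FiniteDimensional K U] (a : V →ₗ[K] U)
    (a' : V' →ₗ[K] U) (g : V ≃ₗ[K] V') (hg : (ker a).map g.toLinearMap = ker a')
    {k k' : Submodule K U} (hk : range a ≤ k) (hk' : range a' ≤ k')
    (hkk' : finrank K k = finrank K k') :
    ∃ G : U ≃ₗ[K] U, G.toLinearMap ∘ₗ a = a' ∘ₗ g.toLinearMap ∧ k.map G.toLinearMap = k' := by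
  let e : range a ≃ₗ[K] range a' :=
    a.quotKerEquivRange.symm ≪≫ₗ Quotient.equiv _ _ g hg ≪≫ₗ a'.quotKerEquivRange
  obtain ⟨G, hGe, hGk⟩ := exists_linearEquiv_restrict_eq_map_eq hk hk' e hkk'
  refine ⟨G, LinearMap.ext fun x => ?_, hGk⟩
  rw [LinearMap.comp_apply, LinearEquiv.coe_coe, ← hGe ⟨a x, mem_range_self a x⟩]
  simp [e]

end LinearMap

section Complex

open LinearMap

variable {K : Type*} [DivisionRing K] {W : ℕ → Type*} [∀ i, AddCommGroup (W i)]
  [∀ i, Module K (W i)] {f f' : ∀ i, W i →ₗ[K] W (i + 1)}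

/-- Extending by zero after `f (n - 2)` turns a complex of length `n` into one indexed by `ℕ`. -/
def truncate (n : ℕ) (f : ∀ i, W i →ₗ[K] W (i + 1)) (i : ℕ) : W i →ₗ[K] W (i + 1) :=
  if i + 2 ≤ n then f i else 0

theorem truncate_of_le {n i : ℕ} (h : i + 2 ≤ n) : truncate n f i = f i :=
  if_pos h

theorem truncate_of_lt {n i : ℕ} (h : n < i + 2) : truncate n f i = 0 :=
  if_neg (by omega)

theorem truncate_comp_truncate {n : ℕ} (hf : ∀ i, i + 3 ≤ n → f (i + 1) ∘ₗ f i = 0) (i : ℕ) :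
    truncate n f (i + 1) ∘ₗ truncate n f i = 0 := by
  by_cases h : i + 3 ≤ n
  · rw [truncate_of_le h, truncate_of_le (by omega), hf i h]
  · rw [truncate_of_lt (by omega), zero_comp]

theorem finrank_range_truncate_eq {n : ℕ}
    (hr : ∀ i, i + 2 ≤ n → finrank K (range (f i)) = finrank K (range (f' i))) (i : ℕ) :
    finrank K (range (truncate n f i)) = finrank K (range (truncate n f' i)) := by
  by_cases h : i + 2 ≤ n
  · rw [truncate_of_le h, truncate_of_le h, hr i h]
  · rw [truncate_of_lt (by omega), truncate_of_lt (by omega)]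

theorem exists_linearEquiv_conj_of_finrank_range_eq [∀ i, FiniteDimensional K (W i)]
    (hf : ∀ i, f (i + 1) ∘ₗ f i = 0) (hf' : ∀ i, f' (i + 1) ∘ₗ f' i = 0)
    (hr : ∀ i, finrank K (range (f i)) = finrank K (range (f' i))) :
    ∃ g : ∀ i, W i ≃ₗ[K] W i, ∀ i, (g (i + 1)).toLinearMap ∘ₗ f i = f' i ∘ₗ g i := by
  let S i := {g : W i ≃ₗ[K] W i // (ker (f i)).map g.toLinearMap = ker (f' i)}
  obtain ⟨g₀, hg₀⟩ : ∃ g₀ : W 0 ≃ₗ[K] W 0, (ker (f 0)).map g₀.toLinearMap = ker (f' 0) := by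
    let e := LinearEquiv.ofFinrankEq _ _ (finrank_ker_eq_of_finrank_range_eq (hr 0))
    obtain ⟨G, hG⟩ := Submodule.exists_linearEquiv_restrict_eq e
    exact ⟨G, map_eq_of_restrict_eq e G hG⟩
  have step (i : ℕ) (g : S i) :
      ∃ G : S (i + 1), G.1.toLinearMap ∘ₗ f i = f' i ∘ₗ g.1.toLinearMap := by
    obtain ⟨G, hG, hGk⟩ := exists_linearEquiv_comp_eq_comp (f i) (f' i) g.1 g.2
      (range_le_ker_iff.mpr (hf i)) (range_le_ker_iff.mpr (hf' i))
      (finrank_ker_eq_of_finrank_range_eq (hr (i + 1)))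
    exact ⟨⟨G, hGk⟩, hG⟩
  choose next hnext using step
  let g : ∀ i, S i := fun i => Nat.rec ⟨g₀, hg₀⟩ next i
  exact ⟨fun i => (g i).1, fun i => hnext i (g i)⟩

end Complex

/-- Two complexes `(f₀,…,f_{n-2})` and `(f'₀,…,f'_{n-2})` of linear maps between
finite-dimensional complex vector spaces `W⁰,…,W^{n-1}` are conjugate under
`GL(W⁰) × ⋯ × GL(W^{n-1})` (acting by change of basis, `f'_i = g_{i+1} ∘ f_i ∘ g_i⁻¹`)
iff `rank f_i = rank f'_i` for all `0 ≤ i ≤ n-2`. -/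
theorem complexes_conjugate_iff_ranks_eq (n : ℕ)
    (W : ℕ → Type*) [∀ i, AddCommGroup (W i)] [∀ i, Module ℂ (W i)]
    [∀ i, FiniteDimensional ℂ (W i)]
    (f f' : ∀ i : ℕ, W i →ₗ[ℂ] W (i + 1))
    (hcomplex : ∀ i, i + 3 ≤ n → (f (i + 1)).comp (f i) = 0)
    (hcomplex' : ∀ i, i + 3 ≤ n → (f' (i + 1)).comp (f' i) = 0) :
    (∃ g : ∀ i : ℕ, W i ≃ₗ[ℂ] W i, ∀ i, i + 2 ≤ n →
        f' i = ((g (i + 1)).toLinearMap.comp ((f i).comp (g i).symm.toLinearMap))) ↔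
      (∀ i, i + 2 ≤ n →
        Module.finrank ℂ (LinearMap.range (f i)) =
          Module.finrank ℂ (LinearMap.range (f' i))) := by
  constructor
  · rintro ⟨g, hg⟩ i hi
    rw [hg i hi, LinearMap.range_comp, LinearEquiv.finrank_map_eq, LinearMap.range_comp,
      LinearEquiv.range, Submodule.map_top]
  · intro hr
    obtain ⟨g, hg⟩ := exists_linearEquiv_conj_of_finrank_range_eq
      (truncate_comp_truncate hcomplex) (truncate_comp_truncate hcomplex')
      (finrank_range_truncate_eq hr)
    refine ⟨g, fun i hi => ?_⟩
    have hgi := hg i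
    rw [truncate_of_le hi, truncate_of_le hi] at hgi
    rw [← LinearMap.comp_assoc, LinearEquiv.eq_comp_toLinearMap_symm, hgi]
end

section
/- Let (w₀,…,w_{n-1}) ∈ ℕⁿ and let r = (r₀,…,r_{n-2}) ∈ ℕ^{n-1} satisfy r_{i-1} + r_i ≤ w_i for all 0 ≤ i ≤ n-1 (with the convention r_{-1} = r_{n-1} = 0). Call such a tuple r admissible, and define Ω(r) = {i ∈ {0,…,n-1} : w_i - r_{i-1} - r_i ≠ 0}. Then r is maximal with respect to the componentwise order among admissible tuples (i.e. there is no admissible r' with r'_i ≥ r_i for all i and r' ≠ r) if and only if Ω(r) is sparse, i.e. Ω(r) contains no two consecutive integers. -/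
/-- A rank tuple `r = (r₀,…,r_{n-2})` (encoded as a function `ℕ → ℕ` vanishing from
index `n-1` on) is admissible for the dimension tuple `(w₀,…,w_{n-1})` if
`r_{i-1} + r_i ≤ w_i` for all `0 ≤ i ≤ n-1`, with the convention `r_{-1} = r_{n-1} = 0`. -/
def Admissible (n : ℕ) (w r : ℕ → ℕ) : Prop :=
  (∀ i, n - 1 ≤ i → r i = 0) ∧ r 0 ≤ w 0 ∧
    ∀ i, 1 ≤ i → i ≤ n - 1 → r (i - 1) + r i ≤ w i

/-- The Betti numbers `h_i(r) = w_i - r_{i-1} - r_i` (with `r_{-1} = 0`). -/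
def betti (w r : ℕ → ℕ) (i : ℕ) : ℕ :=
  if i = 0 then w 0 - r 0 else w i - r (i - 1) - r i

/-- An admissible rank tuple `r` is maximal among admissible tuples with respect to the
componentwise order iff the set `Ω(r) = {i ∈ {0,…,n-1} : h_i(r) ≠ 0}` is sparse,
i.e. contains no two consecutive integers. -/
theorem maximal_admissible_iff_sparse (n : ℕ) (hn : 1 ≤ n) (w r : ℕ → ℕ)
    (hr : Admissible n w r) :
    (¬ ∃ r' : ℕ → ℕ, Admissible n w r' ∧ (∀ i, r i ≤ r' i) ∧ r' ≠ r) ↔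
      (∀ i, (i < n ∧ betti w r i ≠ 0) → ¬ (i + 1 < n ∧ betti w r (i + 1) ≠ 0)) := by
  classical
  obtain ⟨hr0, hr1, hr2⟩ := hr
  constructor
  · rintro hmax i ⟨hin, hbi⟩ ⟨hin1, hbi1⟩
    have hi : i < n - 1 := by omega
    have hbetti1 : w (i + 1) - r i - r (i + 1) ≠ 0 := by
      simpa [betti] using hbi1
    apply hmax
    refine ⟨fun j => if j = i then r i + 1 else r j, ⟨?_, ?_, ?_⟩, ?_, ?_⟩
    · intro j hj
      show (if j = i then r i + 1 else r j) = 0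
      rw [if_neg (show j ≠ i by omega)]
      exact hr0 j hj
    · show (if 0 = i then r i + 1 else r 0) ≤ w 0
      by_cases h : i = 0
      · subst h
        have hb : w 0 - r 0 ≠ 0 := by simpa [betti] using hbi
        rw [if_pos rfl]
        omega
      · rw [if_neg (show (0:ℕ) ≠ i from fun hc => h hc.symm)]
        exact hr1
    · intro j hj1 hjn
      show (if j - 1 = i then r i + 1 else r (j - 1)) + (if j = i then r i + 1 else r j) ≤ w j
      by_cases hji : j = i
      · subst hji
        have hb : w j - r (j - 1) - r j ≠ 0 := by
          simpa [betti, show j ≠ 0 by omega] using hbi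
        rw [if_pos rfl, if_neg (show j - 1 ≠ j by omega)]
        omega
      · by_cases hji1 : j = i + 1
        · subst hji1
          rw [if_pos (by omega), if_neg hji]
          have : i + 1 - 1 = i := by omega
          omega
        · rw [if_neg hji, if_neg (show j - 1 ≠ i by omega)]
          exact hr2 j hj1 hjn
    · intro j
      show r j ≤ if j = i then r i + 1 else r j
      by_cases hji : j = i
      · subst hji; rw [if_pos rfl]; omega
      · rw [if_neg hji]
    · intro h
      have := congrFun h i
      simp at this
  · rintro hsparse ⟨r', ⟨h0', h1', h2'⟩, hge, hne⟩
    obtain ⟨j, hj⟩ : ∃ j, r' j ≠ r j := Function.ne_iff.mp hne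
    have hjlt : r j < r' j := lt_of_le_of_ne (hge j) (Ne.symm hj)
    have hjn : j < n - 1 := by
      by_contra h
      have h0 := h0' j (by omega)
      omega
    refine hsparse j ⟨by omega, ?_⟩ ⟨by omega, ?_⟩
    · by_cases hj0 : j = 0
      · subst hj0
        simp only [betti, if_pos rfl, if_true, eq_self_iff_true]
        omega
      · have h2 := h2' j (by omega) (by omega)
        have hg := hge (j - 1)
        simp only [betti, if_neg hj0]
        omega
    · have h2 := h2' (j + 1) (by omega) (by omega)
      rw [Nat.add_sub_cancel] at h2
      have hg := hge (j + 1)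
      simp only [betti, Nat.add_sub_cancel, if_neg (Nat.succ_ne_zero j)]
      omega
end

section
/- Let R be a commutative ring, let Y : ℂ× → R× be any function into the units of R, and let q, a ∈ ℂ×. For n ∈ ℕ define χ(n, a) = Σ_{i=0}^{n} (Π_{j=1}^{n-i} Y(q^{2(j-1)}a)) · (Π_{j=1}^{i} Y(q^{2(n-i+j)}a))⁻¹ ∈ R (so χ(0,a) = 1). Then for every n ≥ 1 the T-system identity holds: χ(n, a) · χ(n, q²a) = χ(n+1, a) · χ(n-1, q²a) + 1. -/
/-- The explicit `q`-character of the Kirillov–Reshetikhin module `W_{n,a}`,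
`χ(n,a) = Σ_{i=0}^{n} (Π_{j=1}^{n-i} Y(q^{2(j-1)}a)) · (Π_{j=1}^{i} Y(q^{2(n-i+j)}a))⁻¹`,
evaluated at an arbitrary assignment `Y : ℂ× → R×` of units of a commutative ring `R`. -/
def KRchar {R : Type*} [CommRing R] (Y : ℂˣ → Rˣ) (q : ℂˣ) (n : ℕ) (a : ℂˣ) : R :=
  ∑ i ∈ Finset.range (n + 1),
    (↑(∏ j ∈ Finset.range (n - i), Y (q ^ (2 * j) * a)) : R) *
      (↑(∏ j ∈ Finset.range i, Y (q ^ (2 * (n - i + j + 1)) * a))⁻¹ : R)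

/-- Generic form of the `q`-character sum, for any sequence of units `f : ℕ → Rˣ`. -/
private def chiAux {R : Type*} [CommRing R] (f : ℕ → Rˣ) (n : ℕ) : R :=
  ∑ i ∈ Finset.range (n + 1),
    (↑(∏ j ∈ Finset.range (n - i), f j) : R) *
      (↑(∏ j ∈ Finset.range i, f (n - i + j + 1))⁻¹ : R)

/-- Splitting off the last summand: `χ(n+1,a) = Y₀ · χ(n,q²a) + (Y₁⋯Y_{n+1})⁻¹`. -/
private lemma chiAux_A {R : Type*} [CommRing R] (f : ℕ → Rˣ) (n : ℕ) :
    chiAux f (n + 1) =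
      ↑(f 0) * chiAux (fun k => f (k + 1)) n
        + (↑(∏ j ∈ Finset.range (n + 1), f (j + 1))⁻¹ : R) := by
  rw [chiAux, Finset.sum_range_succ]
  congr 1
  · rw [chiAux, Finset.mul_sum]
    refine Finset.sum_congr rfl fun i hi => ?_
    have hi' : i ≤ n := Nat.lt_succ_iff.mp (Finset.mem_range.mp hi)
    have e1 : (∏ j ∈ Finset.range i, f (n + 1 - i + j + 1))
        = ∏ j ∈ Finset.range i, f (n - i + j + 1 + 1) :=
      Finset.prod_congr rfl fun j _ => by congr 1; omega
    have e2 : (∏ j ∈ Finset.range (n + 1 - i), f j)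
        = (∏ j ∈ Finset.range (n - i), f (j + 1)) * f 0 := by
      rw [show n + 1 - i = n - i + 1 from by omega, Finset.prod_range_succ']
    rw [e1, e2, Units.val_mul]
    ring
  · simp [Nat.sub_self]

/-- Splitting off the first summand of the shifted character:
`χ(n+1,q²a) = Y_{n+2}⁻¹ · χ(n,q²a) + Y₁⋯Y_{n+1}`. -/
private lemma chiAux_B {R : Type*} [CommRing R] (f : ℕ → Rˣ) (n : ℕ) :
    chiAux (fun k => f (k + 1)) (n + 1) =
      (↑(f (n + 2))⁻¹ : R) * chiAux (fun k => f (k + 1)) n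
        + (↑(∏ j ∈ Finset.range (n + 1), f (j + 1)) : R) := by
  rw [chiAux, Finset.sum_range_succ']
  congr 1
  · rw [chiAux, Finset.mul_sum]
    refine Finset.sum_congr rfl fun i hi => ?_
    have hi' : i ≤ n := Nat.lt_succ_iff.mp (Finset.mem_range.mp hi)
    have e1 : (∏ j ∈ Finset.range (n + 1 - (i + 1)), (fun k => f (k + 1)) j)
        = ∏ j ∈ Finset.range (n - i), f (j + 1) := by
      rw [show n + 1 - (i + 1) = n - i from by omega]
    have e2 : (∏ j ∈ Finset.range (i + 1), (fun k => f (k + 1)) (n + 1 - (i + 1) + j + 1))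
        = (∏ j ∈ Finset.range i, f (n - i + j + 1 + 1)) * f (n + 2) := by
      rw [Finset.prod_range_succ]
      congr 1
      · exact Finset.prod_congr rfl fun j _ => by simp only []; congr 1; omega
      · simp only []; congr 1; omega
    rw [e1, e2, mul_inv, Units.val_mul]
    ring
  · simp

private lemma KRchar_eq_chiAux {R : Type*} [CommRing R] (Y : ℂˣ → Rˣ) (q a : ℂˣ) (n : ℕ) :
    KRchar Y q n a = chiAux (fun k => Y (q ^ (2 * k) * a)) n := rfl

private lemma KRchar_shift {R : Type*} [CommRing R] (Y : ℂˣ → Rˣ) (q a : ℂˣ) (n : ℕ) :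
    KRchar Y q n (q ^ 2 * a)
      = chiAux (fun k => (fun k => Y (q ^ (2 * k) * a)) (k + 1)) n := by
  rw [KRchar_eq_chiAux]
  congr 1
  funext k
  congr 1
  rw [← mul_assoc, ← pow_add, show 2 * k + 2 = 2 * (k + 1) from by ring]

/-- The T-system identity
`χ(n, a) · χ(n, q²a) = χ(n+1, a) · χ(n-1, q²a) + 1` holds in any commutative ring `R`
for any assignment `Y : ℂ× → R×` and any `q, a ∈ ℂ×` and `n ≥ 1`. -/
theorem KRchar_T_system {R : Type*} [CommRing R] (Y : ℂˣ → Rˣ) (q a : ℂˣ)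
    (n : ℕ) (hn : 1 ≤ n) :
    KRchar Y q n a * KRchar Y q n (q ^ 2 * a) =
      KRchar Y q (n + 1) a * KRchar Y q (n - 1) (q ^ 2 * a) + 1 := by
  obtain ⟨m, rfl⟩ : ∃ m, n = m + 1 := ⟨n - 1, by omega⟩
  set f : ℕ → Rˣ := fun k => Y (q ^ (2 * k) * a) with hf
  simp only [Nat.add_sub_cancel]
  rw [KRchar_eq_chiAux Y q a, KRchar_eq_chiAux Y q a (m + 1 + 1),
    KRchar_shift Y q a, KRchar_shift Y q a m,
    chiAux_A f m, chiAux_A f (m + 1), chiAux_B f m]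
  set X := chiAux (fun k => f (k + 1)) m
  set J := ∏ j ∈ Finset.range (m + 1), f (j + 1) with hJ
  have hJ2 : (∏ j ∈ Finset.range (m + 1 + 1), f (j + 1)) = J * f (m + 2) := by
    rw [Finset.prod_range_succ]
  rw [hJ2, mul_inv, Units.val_mul]
  have h2 : (↑J⁻¹ : R) * ↑J = 1 := Units.inv_mul J
  linear_combination h2
end
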